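/- Let 𝓝 be a separable von Neumann algebra, A ⊆ 𝓝 an abelian von Neumann subalgebra, and Aₙ ⊆ A an increasing sequence of finite dimensional subalgebras with weak closure of ∪ₙAₙ equal to A. Then for every normal functional φ on 𝓝 vanishing on A' ∩ 𝓝, one has limₙ ‖φ ∘ E_{Aₙ'∩𝓝}‖ = 0, where E_{Aₙ'∩𝓝} is the conditional expectation of 𝓝 onto Aₙ' ∩ 𝓝 obtained by averaging over the (finite) unitary group of the diagonal of Aₙ. -/

import Mathlib

open scoped InnerProductSpace

namespace ErgodicEmbeddings

variable {H : Type*} [NormedAddCommGroup H] [InnerProductSpace ℂ H] [CompleteSpace H]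

/-- The bounded functional on `B(H)` given by `x ↦ ⟪η, x ξ⟫`. -/
noncomputable def vecFunc (ξ η : H) : (H →L[ℂ] H) →L[ℂ] ℂ :=
  (innerSL ℂ η).comp (ContinuousLinearMap.apply ℂ H ξ)

/-- A bounded functional on `B(H)` is *normal* if it lies in the norm closure of the
linear span of the vector functionals (i.e. it comes from a trace-class operator). -/
def IsNormalFunctional (φ : (H →L[ℂ] H) →L[ℂ] ℂ) : Prop :=
  φ ∈ closure (Submodule.span ℂ (Set.range fun p : H × H => vecFunc p.1 p.2) : Set _)

/-- A normal state. -/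
def IsNormalState (φ : (H →L[ℂ] H) →L[ℂ] ℂ) : Prop :=
  IsNormalFunctional φ ∧ φ 1 = 1 ∧ ∀ x : H →L[ℂ] H, 0 ≤ (φ (star x * x)).re ∧ (φ (star x * x)).im = 0

/-- The functional `u·φ·u* : x ↦ φ (u* x u)`. -/
noncomputable def conjFunc (u : H →L[ℂ] H) (φ : (H →L[ℂ] H) →L[ℂ] ℂ) :
    (H →L[ℂ] H) →L[ℂ] ℂ :=
  φ.comp (((ContinuousLinearMap.mul ℂ (H →L[ℂ] H)) (star u)).comp
    ((ContinuousLinearMap.mul ℂ (H →L[ℂ] H)).flip u))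

/-- Norm of the restriction of a functional to a subset (over its unit ball). -/
noncomputable def restNorm (φ : (H →L[ℂ] H) →L[ℂ] ℂ) (A : Set (H →L[ℂ] H)) : ℝ :=
  sSup {r : ℝ | ∃ x ∈ A, ‖x‖ ≤ 1 ∧ r = ‖φ x‖}

/-- A unitary element of the von Neumann algebra `M`. -/
def IsUnitaryIn (M : VonNeumannAlgebra H) (u : H →L[ℂ] H) : Prop :=
  u ∈ M ∧ star u * u = 1 ∧ u * star u = 1

/-- `y` belongs to the closure of `S` in the weak operator topology. -/
def InWOTClosure (S : Set (H →L[ℂ] H)) (y : H →L[ℂ] H) : Prop :=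
  ∀ (F : Finset (H × H)) (ε : ℝ), 0 < ε →
    ∃ z ∈ S, ∀ p ∈ F, ‖⟪p.2, (z - y) p.1⟫_ℂ‖ < ε

/-- The set of `Ad`-conjugates of `x` by unitaries of `M`. -/
def unitaryConjugates (M : VonNeumannAlgebra H) (x : H →L[ℂ] H) : Set (H →L[ℂ] H) :=
  {z | ∃ u : H →L[ℂ] H, IsUnitaryIn M u ∧ z = u * x * star u}

/-- The inclusion `M ⊆ 𝓜` is *MV-ergodic* if for every `x ∈ 𝓜` the weak closure of the
convex hull of the unitary conjugates of `x` by unitaries of `M` contains a scalar. -/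
def MVErgodic (M 𝓜 : VonNeumannAlgebra H) : Prop :=
  ∀ x ∈ 𝓜, ∃ c : ℂ, InWOTClosure (convexHull ℝ (unitaryConjugates M x)) (c • (1 : H →L[ℂ] H))

/-- `M` is a factor: its center consists of the scalars. -/
def IsFactor (M : VonNeumannAlgebra H) : Prop :=
  ∀ x ∈ M, x ∈ M.commutant → ∃ c : ℂ, x = c • (1 : H →L[ℂ] H)

/-- Orthogonal projection onto the closure of `{a ξ | a ∈ S}`'s linear span. -/
noncomputable def cycProj (S : Set (H →L[ℂ] H)) (ξ : H) : H →L[ℂ] H :=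
  haveI : CompleteSpace (Submodule.span ℂ ((fun a : H →L[ℂ] H => a ξ) '' S)).topologicalClosure :=
    (Submodule.span ℂ ((fun a : H →L[ℂ] H => a ξ) '' S)).isClosed_topologicalClosure.completeSpace_coe
  (Submodule.span ℂ ((fun a : H →L[ℂ] H => a ξ) '' S)).topologicalClosure.subtypeL.comp
    (Submodule.orthogonalProjectionOnto (Submodule.span ℂ ((fun a : H →L[ℂ] H => a ξ) '' S)).topologicalClosure)

/-- The von Neumann algebra generated by a self-adjoint unital set: its double commutant. -/
def vnGen (S : Set (H →L[ℂ] H)) : Set (H →L[ℂ] H) :=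
  Set.centralizer (Set.centralizer S)


/-- The conditional expectation onto the relative commutant of a finite partition:
`x ↦ ∑ⱼ eⱼ x eⱼ`, as a continuous linear map on `B(H)`. -/
noncomputable def compressionMap {H : Type*} [NormedAddCommGroup H] [InnerProductSpace ℂ H]
    [CompleteSpace H] {k : ℕ} (e : Fin k → (H →L[ℂ] H)) :
    (H →L[ℂ] H) →L[ℂ] (H →L[ℂ] H) :=
  ∑ j, ((ContinuousLinearMap.mul ℂ (H →L[ℂ] H)) (e j)).comp
    ((ContinuousLinearMap.mul ℂ (H →L[ℂ] H)).flip (e j))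

-- AUX LEMMAS (to be inserted before the theorem)

open Filter in
theorem selfadj_inner_move (p : H →L[ℂ] H) (hsa : star p = p) (a b : H) :
    ⟪p a, b⟫_ℂ = ⟪a, p b⟫_ℂ := by
  have := ContinuousLinearMap.adjoint_inner_left p b a
  rwa [← ContinuousLinearMap.star_eq_adjoint, hsa] at this

theorem proj_apply_norm_le (p : H →L[ℂ] H) (hsa : star p = p) (hid : p * p = p) (w : H) :
    ‖p w‖ ≤ ‖w‖ := by
  have h1 : (‖p w‖ : ℝ)^2 = (⟪p w, p w⟫_ℂ).re := (inner_self_eq_norm_sq (𝕜 := ℂ) (p w)).symm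
  have h2 : ⟪p w, p w⟫_ℂ = ⟪w, p w⟫_ℂ := by
    rw [selfadj_inner_move p hsa, ← ContinuousLinearMap.mul_apply, hid]
  have h3 : (⟪w, p w⟫_ℂ).re ≤ ‖w‖ * ‖p w‖ := by
    have ha : (⟪w, p w⟫_ℂ).re ≤ ‖(⟪w, p w⟫_ℂ)‖ := Complex.re_le_norm _
    exact le_trans ha (norm_inner_le_norm (𝕜 := ℂ) _ _)
  have h2' : (⟪p w, p w⟫_ℂ).re = (⟪w, p w⟫_ℂ).re := by rw [h2]
  nlinarith [norm_nonneg (p w), norm_nonneg w]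

theorem compressionMap_apply' {k : ℕ} (e : Fin k → (H →L[ℂ] H)) (x : H →L[ℂ] H) :
    compressionMap e x = ∑ j, e j * x * e j := by
  simp [compressionMap, ContinuousLinearMap.sum_apply, mul_assoc]

theorem compressionMap_norm_le {k : ℕ} (e : Fin k → (H →L[ℂ] H))
    (hproj : ∀ i, star (e i) = e i ∧ e i * e i = e i)
    (horth : ∀ i j, i ≠ j → e i * e j = 0)
    (hsum : ∑ i, e i = 1) (x : H →L[ℂ] H) :
    ‖compressionMap e x‖ ≤ ‖x‖ := by
  rw [compressionMap_apply']
  refine ContinuousLinearMap.opNorm_le_bound _ (norm_nonneg x) (fun ξ => ?_)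
  set v : Fin k → H := fun j => (e j * x * e j) ξ with hv
  have happ : (∑ j, e j * x * e j) ξ = ∑ j, v j := by
    simp [hv, ContinuousLinearMap.sum_apply]
  rw [happ]
  have horthv : ∀ i j, i ≠ j → ⟪v i, v j⟫_ℂ = 0 := by
    intro i j hij
    have : v i = e i ((x * e i) ξ) := rfl
    rw [this]
    have : v j = e j ((x * e j) ξ) := rfl
    rw [this, selfadj_inner_move (e i) (hproj i).1, ← ContinuousLinearMap.mul_apply,
      horth i j hij]
    simp
  have hsumsq : ‖∑ j, v j‖^2 = ∑ j, ‖v j‖^2 := by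
    have h1 : ⟪∑ i, v i, ∑ j, v j⟫_ℂ = ∑ i, ⟪v i, v i⟫_ℂ := by
      rw [sum_inner]
      refine Finset.sum_congr rfl (fun i _ => ?_)
      rw [inner_sum]
      rw [Finset.sum_eq_single i]
      · intro b _ hb; exact horthv i b (Ne.symm hb)
      · intro h; exact absurd (Finset.mem_univ i) h
    have h2 : (‖∑ j, v j‖:ℝ)^2 = (⟪∑ i, v i, ∑ j, v j⟫_ℂ).re :=
      (inner_self_eq_norm_sq (𝕜 := ℂ) _).symm
    rw [h2, h1, Complex.re_sum]
    refine Finset.sum_congr rfl (fun i _ => ?_)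
    exact inner_self_eq_norm_sq (𝕜 := ℂ) _
  have hbound : ∀ j, ‖v j‖ ≤ ‖x‖ * ‖e j ξ‖ := by
    intro j
    have : v j = e j (x (e j ξ)) := rfl
    rw [this]
    calc ‖e j (x (e j ξ))‖ ≤ ‖x (e j ξ)‖ :=
          proj_apply_norm_le (e j) (hproj j).1 (hproj j).2 _
      _ ≤ ‖x‖ * ‖e j ξ‖ := x.le_opNorm _
  have hpyth : ∑ j, ‖e j ξ‖^2 = ‖ξ‖^2 := by
    have h1 : ∀ j, (‖e j ξ‖:ℝ)^2 = (⟪ξ, e j ξ⟫_ℂ).re := by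
      intro j
      have h2 : ⟪e j ξ, e j ξ⟫_ℂ = ⟪ξ, e j ξ⟫_ℂ := by
        rw [selfadj_inner_move (e j) (hproj j).1, ← ContinuousLinearMap.mul_apply,
          (hproj j).2]
      rw [← inner_self_eq_norm_sq (𝕜 := ℂ), h2]
      rfl
    calc ∑ j, ‖e j ξ‖^2 = ∑ j, (⟪ξ, e j ξ⟫_ℂ).re := Finset.sum_congr rfl (fun j _ => h1 j)
      _ = (⟪ξ, (∑ j, e j) ξ⟫_ℂ).re := by
          rw [ContinuousLinearMap.sum_apply, inner_sum, Complex.re_sum]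
      _ = (⟪ξ, ξ⟫_ℂ).re := by rw [hsum]; simp
      _ = ‖ξ‖^2 := inner_self_eq_norm_sq (𝕜 := ℂ) _
  have hfinal : ‖∑ j, v j‖^2 ≤ (‖x‖ * ‖ξ‖)^2 := by
    rw [hsumsq]
    calc ∑ j, ‖v j‖^2 ≤ ∑ j, (‖x‖ * ‖e j ξ‖)^2 := by
          refine Finset.sum_le_sum (fun j _ => ?_)
          have := hbound j
          have h0 : (0:ℝ) ≤ ‖v j‖ := norm_nonneg _
          nlinarith [norm_nonneg (e j ξ), norm_nonneg x]
      _ = ‖x‖^2 * ∑ j, ‖e j ξ‖^2 := by rw [Finset.mul_sum]; ring_nf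
      _ = (‖x‖ * ‖ξ‖)^2 := by rw [hpyth]; ring
  exact le_of_pow_le_pow_left₀ two_ne_zero (mul_nonneg (norm_nonneg x) (norm_nonneg ξ)) hfinal

theorem compressionMap_comm_gen {k : ℕ} (e : Fin k → (H →L[ℂ] H))
    (hproj : ∀ i, e i * e i = e i)
    (horth : ∀ i j, i ≠ j → e i * e j = 0) (x : H →L[ℂ] H) (j : Fin k) :
    e j * compressionMap e x = e j * x * e j ∧
      compressionMap e x * e j = e j * x * e j := by
  rw [compressionMap_apply']
  constructor
  · rw [Finset.mul_sum]
    rw [Finset.sum_eq_single j]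
    · rw [← mul_assoc, ← mul_assoc, hproj j]
    · intro b _ hb
      rw [← mul_assoc, ← mul_assoc, horth j b (Ne.symm hb)]
      simp
    · intro h; exact absurd (Finset.mem_univ j) h
  · rw [Finset.sum_mul]
    rw [Finset.sum_eq_single j]
    · rw [mul_assoc, mul_assoc, hproj j, mul_assoc]
    · intro b _ hb
      rw [mul_assoc, mul_assoc, horth b j hb]
      simp
    · intro h; exact absurd (Finset.mem_univ j) h

theorem span_comm {S : Set (H →L[ℂ] H)} {C : H →L[ℂ] H}
    (h : ∀ s ∈ S, s * C = C * s) :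
    ∀ w ∈ Submodule.span ℂ S, w * C = C * w := by
  intro w hw
  refine Submodule.span_induction h ?_ ?_ ?_ hw
  · simp
  · intro a b _ _ ha hb
    rw [add_mul, mul_add, ha, hb]
  · intro c a _ ha
    rw [smul_mul_assoc, mul_smul_comm, ha]

theorem compressionMap_fix {k : ℕ} (f : Fin k → (H →L[ℂ] H))
    (hproj : ∀ i, f i * f i = f i) (hsum : ∑ i, f i = 1)
    {C : H →L[ℂ] H} (hcomm : ∀ i, f i * C = C * f i) :
    compressionMap f C = C := by
  rw [compressionMap_apply']
  calc ∑ j, f j * C * f j = ∑ j, C * f j := by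
        refine Finset.sum_congr rfl (fun j _ => ?_)
        rw [hcomm j, mul_assoc, hproj j]
    _ = C * ∑ j, f j := by rw [Finset.mul_sum]
    _ = C := by rw [hsum, mul_one]

open Filter in
theorem exists_wot_ultralim (y : ℕ → (H →L[ℂ] H)) (hb : ∀ n, ‖y n‖ ≤ 1)
    (𝒰 : Ultrafilter ℕ) :
    ∃ z : H →L[ℂ] H, ‖z‖ ≤ 1 ∧
      ∀ ξ η : H, Tendsto (fun N => ⟪η, y N ξ⟫_ℂ) 𝒰 (nhds ⟪η, z ξ⟫_ℂ) := by
  have hex : ∀ ξ η : H, ∃ c : ℂ, ‖c‖ ≤ ‖η‖ * ‖ξ‖ ∧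
      Tendsto (fun N => ⟪η, y N ξ⟫_ℂ) 𝒰 (nhds c) := by
    intro ξ η
    have hmem : ∀ N, (⟪η, y N ξ⟫_ℂ) ∈ Metric.closedBall (0:ℂ) (‖η‖ * ‖ξ‖) := by
      intro N
      rw [Metric.mem_closedBall, dist_zero_right]
      calc ‖⟪η, y N ξ⟫_ℂ‖ ≤ ‖η‖ * ‖y N ξ‖ := norm_inner_le_norm (𝕜 := ℂ) _ _
        _ ≤ ‖η‖ * (‖y N‖ * ‖ξ‖) := by
            gcongr; exact (y N).le_opNorm ξ
        _ ≤ ‖η‖ * (1 * ‖ξ‖) := by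
            gcongr
            exact hb N
        _ = ‖η‖ * ‖ξ‖ := by ring
    obtain ⟨c, hc, hle⟩ := (isCompact_closedBall (0:ℂ) (‖η‖ * ‖ξ‖)).ultrafilter_le_nhds
      (𝒰.map fun N => ⟪η, y N ξ⟫_ℂ)
      (by
        rw [Ultrafilter.coe_map, le_principal_iff, mem_map]
        exact univ_mem' hmem)
    refine ⟨c, ?_, hle⟩
    simpa [dist_zero_right] using Metric.mem_closedBall.1 hc
  choose F hFle hFt using hex
  classical
  have hadd_r : ∀ ξ ξ' η : H, F (ξ + ξ') η = F ξ η + F ξ' η := by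
    intro ξ ξ' η
    refine tendsto_nhds_unique (hFt (ξ + ξ') η) ?_
    have := (hFt ξ η).add (hFt ξ' η)
    simpa [inner_add_right, map_add] using this
  have hsmul_r : ∀ (c : ℂ) (ξ η : H), F (c • ξ) η = c * F ξ η := by
    intro c ξ η
    refine tendsto_nhds_unique (hFt (c • ξ) η) ?_
    have := (hFt ξ η).const_mul c
    simpa [inner_smul_right, map_smul] using this
  have hadd_l : ∀ ξ η η' : H, F ξ (η + η') = F ξ η + F ξ η' := by
    intro ξ η η'
    refine tendsto_nhds_unique (hFt ξ (η + η')) ?_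
    have := (hFt ξ η).add (hFt ξ η')
    simpa [inner_add_left] using this
  have hsmul_l : ∀ (c : ℂ) (ξ η : H), F ξ (c • η) = (starRingEnd ℂ) c * F ξ η := by
    intro c ξ η
    refine tendsto_nhds_unique (hFt ξ (c • η)) ?_
    have := (hFt ξ η).const_mul ((starRingEnd ℂ) c)
    simpa [inner_smul_left, mul_comm] using this
  let g : H → (H →L[ℂ] ℂ) := fun ξ =>
    LinearMap.mkContinuous
      { toFun := fun η => (starRingEnd ℂ) (F ξ η)
        map_add' := by intro a b; simp [hadd_l, map_add]
        map_smul' := by intro c a; simp [hsmul_l] }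
      ‖ξ‖
      (by
        intro η
        simp only [LinearMap.coe_mk, AddHom.coe_mk]
        rw [RCLike.norm_conj]
        calc ‖F ξ η‖ ≤ ‖η‖ * ‖ξ‖ := hFle ξ η
          _ = ‖ξ‖ * ‖η‖ := by ring)
  have hg : ∀ ξ η, g ξ η = (starRingEnd ℂ) (F ξ η) := fun ξ η => rfl
  have hgnorm : ∀ ξ, ‖g ξ‖ ≤ ‖ξ‖ := by
    intro ξ
    exact LinearMap.mkContinuous_norm_le _ (norm_nonneg ξ) _
  let zf : H → H := fun ξ => (InnerProductSpace.toDual ℂ H).symm (g ξ)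
  have hz : ∀ ξ η, ⟪η, zf ξ⟫_ℂ = F ξ η := by
    intro ξ η
    have h1 : ⟪zf ξ, η⟫_ℂ = g ξ η := InnerProductSpace.toDual_symm_apply
    have h2 : ⟪η, zf ξ⟫_ℂ = (starRingEnd ℂ) (⟪zf ξ, η⟫_ℂ) := (inner_conj_symm _ _).symm
    rw [h2, h1, hg]
    simp
  have hznorm : ∀ ξ, ‖zf ξ‖ ≤ ‖ξ‖ := by
    intro ξ
    calc ‖zf ξ‖ = ‖g ξ‖ := LinearIsometryEquiv.norm_map _ _
      _ ≤ ‖ξ‖ := hgnorm ξ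
  let z : H →L[ℂ] H := LinearMap.mkContinuous
    { toFun := zf
      map_add' := by
        intro a b
        apply ext_inner_left ℂ
        intro v
        rw [hz, inner_add_right, hz, hz, hadd_r]
      map_smul' := by
        intro c a
        apply ext_inner_left ℂ
        intro v
        rw [hz, RingHom.id_apply, inner_smul_right, hz, hsmul_r] }
    1 (fun ξ => by simpa using hznorm ξ)
  have hzapp : ∀ ξ, z ξ = zf ξ := fun _ => rfl
  refine ⟨z, ?_, ?_⟩
  · exact LinearMap.mkContinuous_norm_le _ zero_le_one _
  · intro ξ η
    rw [hzapp, hz]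
    exact hFt ξ η

/-- Lemma 4.1.1°. -/
theorem norm_comp_expectation_tendsto_zero
    {H : Type*} [NormedAddCommGroup H] [InnerProductSpace ℂ H] [CompleteSpace H]
    [SecondCountableTopology H]
    (𝓝 : VonNeumannAlgebra H) (A : VonNeumannAlgebra H)
    (hA𝓝 : (A : Set (H →L[ℂ] H)) ⊆ 𝓝)
    (hAabelian : ∀ x ∈ A, ∀ y ∈ A, x * y = y * x)
    -- increasing sequence of finite partitions generating the increasing
    -- finite dimensional subalgebras `Aₙ ⊆ A`:
    (k : ℕ → ℕ) (e : ∀ n, Fin (k n) → (H →L[ℂ] H))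
    (heA : ∀ n i, e n i ∈ A)
    (heproj : ∀ n i, star (e n i) = e n i ∧ e n i * e n i = e n i)
    (heorth : ∀ n, ∀ i j, i ≠ j → e n i * e n j = 0)
    (hesum : ∀ n, ∑ i, e n i = 1)
    (herefine : ∀ n i, ∃ S : Finset (Fin (k (n + 1))), e n i = ∑ j ∈ S, e (n + 1) j)
    (hegen : ∀ x ∈ A,
      InWOTClosure (Submodule.span ℂ (⋃ n, Set.range (e n)) : Set (H →L[ℂ] H)) x)
    -- a normal functional vanishing on `A' ∩ 𝓝`:
    (φ : (H →L[ℂ] H) →L[ℂ] ℂ) (hφ : IsNormalFunctional φ)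
    (hφvanish : ∀ y ∈ (↑A.commutant ∩ ↑𝓝 : Set (H →L[ℂ] H)), φ y = 0) :
    Filter.Tendsto (fun n => restNorm (φ.comp (compressionMap (e n))) (𝓝 : Set (H →L[ℂ] H)))
      Filter.atTop (nhds 0) := by
  classical
  set S : ℕ → Set ℝ := fun n =>
    {r : ℝ | ∃ x ∈ (𝓝 : Set (H →L[ℂ] H)), ‖x‖ ≤ 1 ∧
      r = ‖(φ.comp (compressionMap (e n))) x‖} with hS
  have hrest : ∀ n, restNorm (φ.comp (compressionMap (e n))) (𝓝 : Set (H →L[ℂ] H))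
      = sSup (S n) := fun n => rfl
  have heN : ∀ n j, e n j ∈ 𝓝 := fun n j => hA𝓝 (heA n j)
  have hEnorm : ∀ n x, ‖compressionMap (e n) x‖ ≤ ‖x‖ := fun n x =>
    compressionMap_norm_le (e n) (heproj n) (heorth n) (hesum n) x
  have hEmem : ∀ n (x : H →L[ℂ] H), x ∈ 𝓝 → compressionMap (e n) x ∈ 𝓝 := by
    intro n x hx
    rw [compressionMap_apply']
    exact sum_mem (fun j _ => mul_mem (mul_mem (heN n j) hx) (heN n j))
  have hspanmono : ∀ m n, m ≤ n → ∀ i, e m i ∈ Submodule.span ℂ (Set.range (e n)) := by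
    intro m n hmn
    induction n, hmn using Nat.le_induction with
    | base => intro i; exact Submodule.subset_span ⟨i, rfl⟩
    | succ n hmn ih =>
      intro i
      have hsub : Submodule.span ℂ (Set.range (e n)) ≤
          Submodule.span ℂ (Set.range (e (n + 1))) := by
        rw [Submodule.span_le]
        rintro _ ⟨j, rfl⟩
        obtain ⟨T, hT⟩ := herefine n j
        rw [hT]
        exact Submodule.sum_mem _ (fun l _ => Submodule.subset_span ⟨l, rfl⟩)
      exact hsub (ih i)
  have hcommE : ∀ m n, m ≤ n → ∀ (x : H →L[ℂ] H) i,
      e m i * compressionMap (e n) x = compressionMap (e n) x * e m i := by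
    intro m n hmn x i
    refine span_comm ?_ (e m i) (hspanmono m n hmn i)
    rintro s ⟨j, rfl⟩
    have hcg := compressionMap_comm_gen (e n) (fun j => (heproj n j).2) (heorth n) x j
    exact hcg.1.trans hcg.2.symm
  have hEfix : ∀ m n, m ≤ n → ∀ x : H →L[ℂ] H,
      compressionMap (e m) (compressionMap (e n) x) = compressionMap (e n) x := by
    intro m n hmn x
    exact compressionMap_fix (e m) (fun i => (heproj m i).2) (hesum m)
      (fun i => hcommE m n hmn x i)
  have hS0 : ∀ n, (0:ℝ) ∈ S n := by
    intro n
    exact ⟨0, SetLike.mem_coe.2 (zero_mem _), by simp, by simp⟩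
  have hbdd : ∀ n, BddAbove (S n) := by
    intro n
    refine ⟨‖φ‖, ?_⟩
    rintro r ⟨x, hx1, hx2, rfl⟩
    calc ‖(φ.comp (compressionMap (e n))) x‖ = ‖φ (compressionMap (e n) x)‖ := rfl
      _ ≤ ‖φ‖ * ‖compressionMap (e n) x‖ := φ.le_opNorm _
      _ ≤ ‖φ‖ * 1 :=
          mul_le_mul_of_nonneg_left (le_trans (hEnorm n x) hx2) (norm_nonneg φ)
      _ = ‖φ‖ := mul_one _
  have hnonneg : ∀ n, 0 ≤ sSup (S n) := fun n => le_csSup (hbdd n) (hS0 n)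
  have hmono : ∀ m n, m ≤ n → sSup (S n) ≤ sSup (S m) := by
    intro m n hmn
    refine Real.sSup_le ?_ (hnonneg m)
    rintro r ⟨x, hx1, hx2, rfl⟩
    have hr : ‖(φ.comp (compressionMap (e n))) x‖
        = ‖(φ.comp (compressionMap (e m))) (compressionMap (e n) x)‖ := by
      rw [ContinuousLinearMap.comp_apply, ContinuousLinearMap.comp_apply, hEfix m n hmn x]
    rw [hr]
    refine le_csSup (hbdd m) ?_
    exact ⟨compressionMap (e n) x, SetLike.mem_coe.2 (hEmem n x (SetLike.mem_coe.1 hx1)),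
      le_trans (hEnorm n x) hx2, rfl⟩
  have key : ∀ ε : ℝ, 0 < ε → ∃ N, sSup (S N) < ε := by
    intro ε hε
    by_contra hcon
    push_neg at hcon
    have hpick : ∀ N : ℕ, ∃ x : H →L[ℂ] H, x ∈ (𝓝 : Set (H →L[ℂ] H)) ∧ ‖x‖ ≤ 1 ∧
        ε / 2 < ‖φ (compressionMap (e N) x)‖ := by
      intro N
      have h1 : ε / 2 < sSup (S N) := lt_of_lt_of_le (half_lt_self hε) (hcon N)
      obtain ⟨r, hr, hlt⟩ := exists_lt_of_lt_csSup ⟨0, hS0 N⟩ h1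
      obtain ⟨x, hx1, hx2, rfl⟩ := hr
      exact ⟨x, hx1, hx2, hlt⟩
    choose x hxmem hxnorm hxbig using hpick
    set y : ℕ → (H →L[ℂ] H) := fun N => compressionMap (e N) (x N) with hy
    have hymem : ∀ N, y N ∈ 𝓝 := fun N => hEmem N (x N) (SetLike.mem_coe.1 (hxmem N))
    have hynorm : ∀ N, ‖y N‖ ≤ 1 := fun N => le_trans (hEnorm N (x N)) (hxnorm N)
    have hycomm : ∀ m i N, m ≤ N → e m i * y N = y N * e m i :=
      fun m i N hmN => hcommE m N hmN (x N) i
    let 𝒰 : Ultrafilter ℕ := Ultrafilter.of Filter.atTop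
    have h𝒰 : (𝒰 : Filter ℕ) ≤ Filter.atTop := Ultrafilter.of_le _
    obtain ⟨z, hznorm, hzt⟩ := exists_wot_ultralim y hynorm 𝒰
    have hzcomm_e : ∀ m i, e m i * z = z * e m i := by
      intro m i
      ext ξ
      apply ext_inner_left ℂ
      intro η
      have hA : Filter.Tendsto (fun N => ⟪e m i η, y N ξ⟫_ℂ) ↑𝒰 (nhds ⟪e m i η, z ξ⟫_ℂ) :=
        hzt ξ (e m i η)
      have hB : Filter.Tendsto (fun N => ⟪η, y N (e m i ξ)⟫_ℂ) ↑𝒰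
          (nhds ⟪η, z (e m i ξ)⟫_ℂ) := hzt (e m i ξ) η
      have hev : ∀ᶠ N in (𝒰 : Filter ℕ),
          (fun N => ⟪e m i η, y N ξ⟫_ℂ) N = (fun N => ⟪η, y N (e m i ξ)⟫_ℂ) N := by
        refine ((Filter.eventually_ge_atTop m).filter_mono h𝒰).mono (fun N hN => ?_)
        calc ⟪e m i η, y N ξ⟫_ℂ = ⟪η, e m i (y N ξ)⟫_ℂ :=
              selfadj_inner_move (e m i) (heproj m i).1 _ _
          _ = ⟪η, (e m i * y N) ξ⟫_ℂ := rfl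
          _ = ⟪η, (y N * e m i) ξ⟫_ℂ := by rw [hycomm m i N hN]
          _ = ⟪η, y N (e m i ξ)⟫_ℂ := rfl
      have huniq := tendsto_nhds_unique (hA.congr' hev) hB
      calc ⟪η, (e m i * z) ξ⟫_ℂ = ⟪η, e m i (z ξ)⟫_ℂ := rfl
        _ = ⟪e m i η, z ξ⟫_ℂ := (selfadj_inner_move (e m i) (heproj m i).1 _ _).symm
        _ = ⟪η, z (e m i ξ)⟫_ℂ := huniq
        _ = ⟪η, (z * e m i) ξ⟫_ℂ := rfl
    have hz𝓝 : z ∈ 𝓝 := by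
      have hcc := 𝓝.centralizer_centralizer
      rw [← SetLike.mem_coe, ← hcc, Set.mem_centralizer_iff]
      intro w hw
      ext ξ
      apply ext_inner_left ℂ
      intro η
      have hA : Filter.Tendsto (fun N => ⟪(ContinuousLinearMap.adjoint w) η, y N ξ⟫_ℂ) ↑𝒰
          (nhds ⟪(ContinuousLinearMap.adjoint w) η, z ξ⟫_ℂ) := hzt ξ _
      have hB : Filter.Tendsto (fun N => ⟪η, y N (w ξ)⟫_ℂ) ↑𝒰 (nhds ⟪η, z (w ξ)⟫_ℂ) :=
        hzt (w ξ) η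
      have heq : ∀ N, ⟪(ContinuousLinearMap.adjoint w) η, y N ξ⟫_ℂ = ⟪η, y N (w ξ)⟫_ℂ := by
        intro N
        calc ⟪(ContinuousLinearMap.adjoint w) η, y N ξ⟫_ℂ = ⟪η, w (y N ξ)⟫_ℂ :=
              ContinuousLinearMap.adjoint_inner_left w _ _
          _ = ⟪η, (w * y N) ξ⟫_ℂ := rfl
          _ = ⟪η, (y N * w) ξ⟫_ℂ := by rw [← hw (y N) (SetLike.mem_coe.2 (hymem N))]
          _ = ⟪η, y N (w ξ)⟫_ℂ := rfl
      have huniq := tendsto_nhds_unique (hA.congr heq) hB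
      calc ⟪η, (w * z) ξ⟫_ℂ = ⟪η, w (z ξ)⟫_ℂ := rfl
        _ = ⟪(ContinuousLinearMap.adjoint w) η, z ξ⟫_ℂ :=
            (ContinuousLinearMap.adjoint_inner_left w _ _).symm
        _ = ⟪η, z (w ξ)⟫_ℂ := huniq
        _ = ⟪η, (z * w) ξ⟫_ℂ := rfl
    have hzspan : ∀ w ∈ Submodule.span ℂ (⋃ n, Set.range (e n)), w * z = z * w := by
      refine span_comm ?_
      intro s hs
      rw [Set.mem_iUnion] at hs
      obtain ⟨n, j, rfl⟩ := hs
      exact hzcomm_e n j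
    have hzA' : ∀ g ∈ A, g * z = z * g := by
      intro g hg
      ext ξ
      apply ext_inner_left ℂ
      intro η
      apply eq_of_forall_dist_le
      intro δ hδ
      obtain ⟨w, hwS, hwcl⟩ := hegen g hg
        {(ξ, (ContinuousLinearMap.adjoint z) η), (z ξ, η)} (δ / 2) (by positivity)
      have hw1 : ‖⟪(ContinuousLinearMap.adjoint z) η, (w - g) ξ⟫_ℂ‖ < δ / 2 := by
        have := hwcl (ξ, (ContinuousLinearMap.adjoint z) η) (by simp)
        simpa using this
      have hw2 : ‖⟪η, (w - g) (z ξ)⟫_ℂ‖ < δ / 2 := by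
        have := hwcl (z ξ, η) (by simp)
        simpa using this
      have hwz : w * z = z * w := hzspan w (SetLike.mem_coe.1 hwS)
      have hkey : ⟪η, (g * z) ξ⟫_ℂ - ⟪η, (z * g) ξ⟫_ℂ
          = - ⟪η, (w - g) (z ξ)⟫_ℂ + ⟪(ContinuousLinearMap.adjoint z) η, (w - g) ξ⟫_ℂ := by
        have h1 : ⟪η, (w - g) (z ξ)⟫_ℂ = ⟪η, w (z ξ)⟫_ℂ - ⟪η, g (z ξ)⟫_ℂ := by
          rw [ContinuousLinearMap.sub_apply, inner_sub_right]
        have h2 : ⟪(ContinuousLinearMap.adjoint z) η, (w - g) ξ⟫_ℂ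
            = ⟪η, w (z ξ)⟫_ℂ - ⟪η, z (g ξ)⟫_ℂ := by
          rw [ContinuousLinearMap.sub_apply, inner_sub_right,
            ContinuousLinearMap.adjoint_inner_left, ContinuousLinearMap.adjoint_inner_left]
          have hzw : z (w ξ) = w (z ξ) := by
            calc z (w ξ) = (z * w) ξ := rfl
              _ = (w * z) ξ := by rw [hwz]
              _ = w (z ξ) := rfl
          rw [hzw]
        have hgz : ⟪η, (g * z) ξ⟫_ℂ = ⟪η, g (z ξ)⟫_ℂ := rfl
        have hzg : ⟪η, (z * g) ξ⟫_ℂ = ⟪η, z (g ξ)⟫_ℂ := rfl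
        rw [hgz, hzg, h1, h2]
        ring
      rw [dist_eq_norm, hkey]
      calc ‖- ⟪η, (w - g) (z ξ)⟫_ℂ + ⟪(ContinuousLinearMap.adjoint z) η, (w - g) ξ⟫_ℂ‖
          ≤ ‖- ⟪η, (w - g) (z ξ)⟫_ℂ‖ + ‖⟪(ContinuousLinearMap.adjoint z) η, (w - g) ξ⟫_ℂ‖ :=
            norm_add_le _ _
        _ = ‖⟪η, (w - g) (z ξ)⟫_ℂ‖ + ‖⟪(ContinuousLinearMap.adjoint z) η, (w - g) ξ⟫_ℂ‖ := by
            rw [norm_neg]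
        _ ≤ δ := by linarith
    have hzcomm : z ∈ A.commutant := VonNeumannAlgebra.mem_commutant_iff.2 hzA'
    have hφz : φ z = 0 := hφvanish z ⟨SetLike.mem_coe.2 hzcomm, SetLike.mem_coe.2 hz𝓝⟩
    have hspanlim : ∀ ψ ∈ Submodule.span ℂ
        (Set.range fun p : H × H => vecFunc (H := H) p.1 p.2),
        Filter.Tendsto (fun N => ψ (y N)) ↑𝒰 (nhds (ψ z)) := by
      intro ψ hψ
      refine Submodule.span_induction ?_ ?_ ?_ ?_ hψ
      · rintro s ⟨p, rfl⟩
        exact hzt p.1 p.2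
      · simpa using (tendsto_const_nhds :
          Filter.Tendsto (fun _ : ℕ => (0:ℂ)) ↑𝒰 (nhds 0))
      · intro a b _ _ ha hb
        simpa [ContinuousLinearMap.add_apply] using ha.add hb
      · intro c a _ ha
        simpa [ContinuousLinearMap.smul_apply, smul_eq_mul] using ha.const_mul c
    have hφ' : φ ∈ closure ((Submodule.span ℂ
        (Set.range fun p : H × H => vecFunc (H := H) p.1 p.2) :
          Submodule ℂ ((H →L[ℂ] H) →L[ℂ] ℂ)) : Set _) := hφ
    have hφlim : Filter.Tendsto (fun N => φ (y N)) ↑𝒰 (nhds (φ z)) := by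
      rw [Metric.tendsto_nhds]
      intro δ hδ
      obtain ⟨ψ, hψmem, hψclose⟩ := Metric.mem_closure_iff.1 hφ' (δ / 4) (by positivity)
      have hev := Metric.tendsto_nhds.1 (hspanlim ψ (SetLike.mem_coe.1 hψmem)) (δ / 4)
        (by positivity)
      refine hev.mono (fun N hN => ?_)
      have hd1 : dist (φ (y N)) (ψ (y N)) ≤ δ / 4 := by
        rw [dist_eq_norm]
        calc ‖φ (y N) - ψ (y N)‖ = ‖(φ - ψ) (y N)‖ := by rw [ContinuousLinearMap.sub_apply]
          _ ≤ ‖φ - ψ‖ * ‖y N‖ := (φ - ψ).le_opNorm _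
          _ ≤ ‖φ - ψ‖ * 1 := mul_le_mul_of_nonneg_left (hynorm N) (norm_nonneg _)
          _ = ‖φ - ψ‖ := mul_one _
          _ ≤ δ / 4 := by
              have hc := hψclose
              rw [dist_eq_norm] at hc
              linarith
      have hd2 : dist (ψ z) (φ z) ≤ δ / 4 := by
        rw [dist_eq_norm]
        calc ‖ψ z - φ z‖ = ‖(ψ - φ) z‖ := by rw [ContinuousLinearMap.sub_apply]
          _ ≤ ‖ψ - φ‖ * ‖z‖ := (ψ - φ).le_opNorm _
          _ ≤ ‖ψ - φ‖ * 1 := mul_le_mul_of_nonneg_left hznorm (norm_nonneg _)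
          _ = ‖φ - ψ‖ := by rw [mul_one, norm_sub_rev]
          _ ≤ δ / 4 := by
              have hc := hψclose
              rw [dist_eq_norm] at hc
              linarith
      calc dist (φ (y N)) (φ z)
          ≤ dist (φ (y N)) (ψ (y N)) + dist (ψ (y N)) (ψ z) + dist (ψ z) (φ z) :=
            dist_triangle4 _ _ _ _
        _ < δ := by linarith
    have hnl : Filter.Tendsto (fun N => ‖φ (y N)‖) ↑𝒰 (nhds 0) := by
      have hn := hφlim.norm
      rwa [hφz, norm_zero] at hn
    have hevlt : ∀ᶠ N in (𝒰 : Filter ℕ), ‖φ (y N)‖ < ε / 2 := by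
      have ht := Metric.tendsto_nhds.1 hnl (ε / 2) (by positivity)
      refine ht.mono (fun N hN => ?_)
      rw [Real.dist_eq, sub_zero] at hN
      exact lt_of_le_of_lt (le_abs_self _) hN
    obtain ⟨N, hN⟩ := hevlt.exists
    exact absurd (hxbig N) (not_lt.2 (le_of_lt hN))
  have hfun : (fun n => restNorm (φ.comp (compressionMap (e n))) (𝓝 : Set (H →L[ℂ] H)))
      = fun n => sSup (S n) := funext hrest
  rw [hfun]
  refine Metric.tendsto_atTop.2 (fun ε hε => ?_)
  obtain ⟨N, hN⟩ := key ε hε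
  refine ⟨N, fun n hn => ?_⟩
  rw [Real.dist_eq, sub_zero, abs_of_nonneg (hnonneg n)]
  exact lt_of_le_of_lt (hmono N n hn) hN

end ErgodicEmbeddings
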